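/- arXiv:2605.17747 — 2 statements merged into one kernel-verified Lean document; each statement's English description precedes it below -/
import Mathlib

section
/- Let (L, ∘_λ, [·_λ ·]) be a transposed Poisson conformal superalgebra and let h ∈ L₀ be an even element. Define a new λ-bracket on L by [x_λ y]^h := h ∘_(0) [x_λ y], where h ∘_(0) z := (h ∘_μ z)|_{μ=0}. Then (L, ∘_λ, [·_λ ·]^h) is a transposed Poisson conformal superalgebra. -/
open Polynomial
open scoped TensorProduct

noncomputable section

namespace TPCSAFormal

/-- The super-sign `(-1)^{i·j}` for parities `i, j ∈ ℤ/2ℤ`. -/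
def sgn (i j : ZMod 2) : ℂ := (-1 : ℂ) ^ (i.val * j.val)

variable (L : Type*) [AddCommGroup L] [Module ℂ L]
  [Module (Polynomial ℂ) L] [IsScalarTower ℂ (Polynomial ℂ) L]

/-- A conformal `λ`-product on the `ℂ[∂]`-module `L`, recorded by its family of `n`-th
product coefficients: `a ∘_λ b = ∑_n λ^n • coeff n a b`, with finitely many nonzero terms.
This is exactly the data of a `ℂ`-bilinear map `L ⊗ L → ℂ[λ] ⊗ L`. -/
structure ConformalProduct where
  coeff : ℕ → L →ₗ[ℂ] L →ₗ[ℂ] L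
  coeff_finite : ∀ a b : L, ∃ N : ℕ, ∀ n : ℕ, N ≤ n → coeff n a b = 0

variable {L}

/-- The value `a ∘_λ b` of the `λ`-product at `λ ∈ ℂ`.  Since `ℂ` is infinite, identities
between such values for all `λ` are equivalent to the corresponding polynomial identities. -/
def ConformalProduct.mul (m : ConformalProduct L) (lam : ℂ) (a b : L) : L :=
  ∑ᶠ n : ℕ, lam ^ n • m.coeff n a b

/-- The value `a ∘_{-∂-λ} b`, where `∂` acts on `L` as scalar multiplication by
`X ∈ ℂ[∂]` (the variable `λ` being replaced by the operator `-∂-λ`). -/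
def ConformalProduct.cmul (m : ConformalProduct L) (lam : ℂ) (a b : L) : L :=
  ∑ᶠ n : ℕ, ((-((X : Polynomial ℂ) + C lam)) ^ n) • m.coeff n a b

variable (L) in
/-- A `ℤ₂`-grading on `L` making it a `ℤ₂`-graded `ℂ[∂]`-module: `L = L₀ ⊕ L₁` with
`∂ L_i ⊆ L_i`, where `∂` acts as multiplication by `X ∈ ℂ[∂]`. -/
structure SuperModule where
  grade : ZMod 2 → Submodule ℂ L
  isInternal : DirectSum.IsInternal grade
  X_smul_mem : ∀ (i : ZMod 2) (a : L), a ∈ grade i → (X : Polynomial ℂ) • a ∈ grade i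

/-- `m` is an even `λ`-product on the `ℤ₂`-graded `ℂ[∂]`-module `(L, S)`:
it is even with respect to the grading and conformally sesquilinear. -/
structure IsLambdaProduct (S : SuperModule L) (m : ConformalProduct L) : Prop where
  even : ∀ (i j : ZMod 2) (a b : L), a ∈ S.grade i → b ∈ S.grade j →
    ∀ n : ℕ, m.coeff n a b ∈ S.grade (i + j)
  sesq_left : ∀ (lam : ℂ) (a b : L),
    m.mul lam ((X : Polynomial ℂ) • a) b = (-lam) • m.mul lam a b
  sesq_right : ∀ (lam : ℂ) (a b : L),
    m.mul lam a ((X : Polynomial ℂ) • b) =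
      (X : Polynomial ℂ) • m.mul lam a b + lam • m.mul lam a b

/-- `(L, S, m)` is a commutative associative conformal superalgebra. -/
structure IsCommAssoc (S : SuperModule L) (m : ConformalProduct L)
    extends IsLambdaProduct S m : Prop where
  comm : ∀ (i j : ZMod 2) (a b : L), a ∈ S.grade i → b ∈ S.grade j →
    ∀ lam : ℂ, m.mul lam a b = sgn i j • m.cmul lam b a
  assoc : ∀ (lam mu : ℂ) (a b c : L),
    m.mul lam a (m.mul mu b c) = m.mul (lam + mu) (m.mul lam a b) c

/-- `(L, S, br)` is a Lie conformal superalgebra. -/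
structure IsLie (S : SuperModule L) (br : ConformalProduct L)
    extends IsLambdaProduct S br : Prop where
  skew : ∀ (i j : ZMod 2) (a b : L), a ∈ S.grade i → b ∈ S.grade j →
    ∀ lam : ℂ, br.mul lam a b = -(sgn i j • br.cmul lam b a)
  jacobi : ∀ (i j : ZMod 2) (a b : L), a ∈ S.grade i → b ∈ S.grade j →
    ∀ (c : L) (lam mu : ℂ),
      br.mul lam a (br.mul mu b c) =
        br.mul (lam + mu) (br.mul lam a b) c + sgn i j • br.mul mu b (br.mul lam a c)

/-- `(L, S, m, br)` is a transposed Poisson conformal superalgebra. -/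
structure IsTPCSA (S : SuperModule L) (m br : ConformalProduct L) : Prop where
  commAssoc : IsCommAssoc S m
  lie : IsLie S br
  transposedLeibniz : ∀ (i j : ZMod 2) (a b : L), a ∈ S.grade i → b ∈ S.grade j →
    ∀ (c : L) (lam mu : ℂ),
      (2 : ℂ) • m.mul lam a (br.mul mu b c) =
        br.mul (lam + mu) (m.mul lam a b) c + sgn i j • br.mul mu b (m.mul lam a c)

/-- `(L, S, m, br)` is a Poisson conformal superalgebra. -/
structure IsPCSA (S : SuperModule L) (m br : ConformalProduct L) : Prop where
  commAssoc : IsCommAssoc S m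
  lie : IsLie S br
  leibniz : ∀ (i j : ZMod 2) (a b : L), a ∈ S.grade i → b ∈ S.grade j →
    ∀ (c : L) (lam mu : ℂ),
      br.mul lam a (m.mul mu b c) =
        m.mul (lam + mu) (br.mul lam a b) c + sgn i j • m.mul mu b (br.mul lam a c)

/-- `(L, S, br, α)` is a Hom-Lie conformal superalgebra. -/
structure IsHomLie (S : SuperModule L) (br : ConformalProduct L) (α : L → L)
    extends IsLambdaProduct S br : Prop where
  map_smul_add : ∀ (c : ℂ) (a b : L), α (c • a + b) = c • α a + α b
  map_grade : ∀ (i : ZMod 2) (a : L), a ∈ S.grade i → α a ∈ S.grade i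
  commute_partial : ∀ a : L, α ((X : Polynomial ℂ) • a) = (X : Polynomial ℂ) • α a
  skew : ∀ (i j : ZMod 2) (a b : L), a ∈ S.grade i → b ∈ S.grade j →
    ∀ lam : ℂ, br.mul lam a b = -(sgn i j • br.cmul lam b a)
  homJacobi : ∀ (i j : ZMod 2) (a b : L), a ∈ S.grade i → b ∈ S.grade j →
    ∀ (c : L) (lam mu : ℂ),
      br.mul lam (α a) (br.mul mu b c) =
        br.mul (lam + mu) (br.mul lam a b) (α c) + sgn i j • br.mul mu (α b) (br.mul lam a c)

/-- `(L, S, p)` is a left-symmetric conformal superalgebra. -/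
structure IsLeftSymmetric (S : SuperModule L) (p : ConformalProduct L)
    extends IsLambdaProduct S p : Prop where
  leftSym : ∀ (i j : ZMod 2) (a b : L), a ∈ S.grade i → b ∈ S.grade j →
    ∀ (c : L) (lam mu : ℂ),
      p.mul (lam + mu) (p.mul lam a b) c - p.mul lam a (p.mul mu b c) =
        sgn i j • (p.mul (lam + mu) (p.mul mu b a) c - p.mul mu b (p.mul lam a c))

/-- `(L, S, p)` is a (left) Novikov conformal superalgebra. -/
structure IsNovikov (S : SuperModule L) (p : ConformalProduct L)
    extends IsLeftSymmetric S p : Prop where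
  novikov : ∀ (j k : ZMod 2) (b c : L), b ∈ S.grade j → c ∈ S.grade k →
    ∀ (a : L) (lam mu : ℂ),
      p.mul (lam + mu) (p.mul lam a b) c = sgn j k • p.cmul mu (p.mul lam a c) b

/-- `(L, S, mc, p)` is a Novikov-Poisson conformal superalgebra. -/
structure IsNovikovPoisson (S : SuperModule L) (mc p : ConformalProduct L) : Prop where
  commAssoc : IsCommAssoc S mc
  novikov : IsNovikov S p
  compat₁ : ∀ (lam mu : ℂ) (a b c : L),
    p.mul (lam + mu) (mc.mul lam a b) c = mc.mul lam a (p.mul mu b c)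
  compat₂ : ∀ (i j : ZMod 2) (a b : L), a ∈ S.grade i → b ∈ S.grade j →
    ∀ (c : L) (lam mu : ℂ),
      mc.mul (lam + mu) (p.mul lam a b) c - p.mul lam a (mc.mul mu b c) =
        sgn i j • (mc.mul (lam + mu) (p.mul mu b a) c - p.mul mu b (mc.mul lam a c))

/-- `(L, S, mc, p)` is a pre-Lie commutative conformal superalgebra. -/
structure IsPreLieComm (S : SuperModule L) (mc p : ConformalProduct L) : Prop where
  commAssoc : IsCommAssoc S mc
  leftSymmetric : IsLeftSymmetric S p
  compat : ∀ (i j : ZMod 2) (a b : L), a ∈ S.grade i → b ∈ S.grade j →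
    ∀ (c : L) (lam mu : ℂ),
      p.mul lam a (mc.mul mu b c) =
        mc.mul (lam + mu) (p.mul lam a b) c + sgn i j • mc.mul mu b (p.mul lam a c)

/-- `(L, S, mc, p)` is a pre-Lie Poisson conformal superalgebra. -/
structure IsPreLiePoisson (S : SuperModule L) (mc p : ConformalProduct L) : Prop where
  commAssoc : IsCommAssoc S mc
  leftSymmetric : IsLeftSymmetric S p
  compat₁ : ∀ (lam mu : ℂ) (a b c : L),
    p.mul (lam + mu) (mc.mul lam a b) c = mc.mul lam a (p.mul mu b c)
  compat₂ : ∀ (i j : ZMod 2) (a b : L), a ∈ S.grade i → b ∈ S.grade j →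
    ∀ (c : L) (lam mu : ℂ),
      mc.mul (lam + mu) (p.mul lam a b) c - p.mul lam a (mc.mul mu b c) =
        sgn i j • (mc.mul (lam + mu) (p.mul mu b a) c - p.mul mu b (mc.mul lam a c))

end TPCSAFormal

/-! `T := h ∘_(0) ·` is a ½-derivation of the bracket, `2 T [b_μ c] = [T b_μ c] + [b_μ T c]`
(the transposed Leibniz rule at `a = h`, `λ = 0`); it commutes with `∂` and, `h` being even,
preserves parity. Post-composing a Lie conformal bracket with such a map again gives a Lie
conformal bracket. Commutativity and associativity, again because `h` is even, make `T` commute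
with every left multiplication `a ∘_λ ·`, and this carries the transposed Leibniz rule over
to `T ∘ [· _λ ·]`. -/

namespace TPCSAFormal

variable {L : Type*} [AddCommGroup L] [Module ℂ L]

namespace ConformalProduct

variable (c : ConformalProduct L)

lemma hasFiniteSupport_smul_coeff {R : Type*} [Zero R] [SMulWithZero R L] (g : ℕ → R)
    (a b : L) : Function.HasFiniteSupport fun n => g n • c.coeff n a b := by
  obtain ⟨N, hN⟩ := c.coeff_finite a b
  refine (Set.finite_Iio N).subset fun n hn => ?_
  by_contra hNn
  exact hn (by simp only [hN n (not_lt.mp hNn), smul_zero])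

protected lemma mul_add (lam : ℂ) (a b b' : L) :
    c.mul lam a (b + b') = c.mul lam a b + c.mul lam a b' := by
  simp only [mul, map_add, smul_add]
  exact finsum_add_distrib (c.hasFiniteSupport_smul_coeff _ a b)
    (c.hasFiniteSupport_smul_coeff _ a b')

protected lemma add_mul (lam : ℂ) (a a' b : L) :
    c.mul lam (a + a') b = c.mul lam a b + c.mul lam a' b := by
  simp only [mul, map_add, LinearMap.add_apply, smul_add]
  exact finsum_add_distrib (c.hasFiniteSupport_smul_coeff _ a b)
    (c.hasFiniteSupport_smul_coeff _ a' b)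

protected lemma mul_smul (lam r : ℂ) (a b : L) : c.mul lam a (r • b) = r • c.mul lam a b := by
  simp only [mul, map_smul, smul_comm (lam ^ _) r]
  exact (smul_finsum' r (c.hasFiniteSupport_smul_coeff _ a b)).symm

protected lemma smul_mul (lam r : ℂ) (a b : L) : c.mul lam (r • a) b = r • c.mul lam a b := by
  simp only [mul, map_smul, LinearMap.smul_apply, smul_comm (lam ^ _) r]
  exact (smul_finsum' r (c.hasFiniteSupport_smul_coeff _ a b)).symm

lemma mul_zero_eq_coeff (a b : L) : c.mul 0 a b = c.coeff 0 a b := by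
  rw [mul, finsum_eq_single _ 0 fun n hn => by rw [zero_pow hn, zero_smul], pow_zero, one_smul]

def compr₂ (D : L →ₗ[ℂ] L) : ConformalProduct L where
  coeff n := (c.coeff n).compr₂ D
  coeff_finite a b := by
    obtain ⟨N, hN⟩ := c.coeff_finite a b
    exact ⟨N, fun n hn => by simp [hN n hn]⟩

lemma mul_compr₂ (D : L →ₗ[ℂ] L) (lam : ℂ) (a b : L) :
    (c.compr₂ D).mul lam a b = D (c.mul lam a b) := by
  rw [mul, mul, map_finsum D (c.hasFiniteSupport_smul_coeff _ a b)]
  simp only [compr₂, LinearMap.compr₂_apply, map_smul]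

end ConformalProduct

section Graded

variable [Module ℂ[X] L] {S : SuperModule L}

lemma IsLambdaProduct.mul_mem {c : ConformalProduct L} (hc : IsLambdaProduct S c)
    {i j : ZMod 2} {a b : L} (ha : a ∈ S.grade i) (hb : b ∈ S.grade j) (lam : ℂ) :
    c.mul lam a b ∈ S.grade (i + j) :=
  finsum_induction (· ∈ S.grade (i + j)) (zero_mem _) (fun _ _ => add_mem)
    fun n => Submodule.smul_mem _ _ (hc.even i j a b ha hb n)

lemma ConformalProduct.cmul_compr₂ (c : ConformalProduct L) {D : L →ₗ[ℂ] L}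
    (hD : ∀ (p : ℂ[X]) (w : L), D (p • w) = p • D w) (lam : ℂ) (a b : L) :
    (c.compr₂ D).cmul lam a b = D (c.cmul lam a b) := by
  rw [cmul, cmul, map_finsum D (c.hasFiniteSupport_smul_coeff _ a b)]
  simp only [compr₂, LinearMap.compr₂_apply, hD]

def IsHalfDerivation (S : SuperModule L) (br : ConformalProduct L) (D : L →ₗ[ℂ] L) : Prop :=
  ∀ (j : ZMod 2) (b : L), b ∈ S.grade j → ∀ (c : L) (mu : ℂ),
    (2 : ℂ) • D (br.mul mu b c) = br.mul mu (D b) c + br.mul mu b (D c)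

/- With `Δ` the Jacobi defect of `D ∘ br` and `E = [Dx,[y,z]] - [[x,y],Dz] - s[Dy,[x,z]]`,
the Jacobi identity of `br` and the half-derivation rule give `Δ = -D E` and `D E = -2 Δ`,
hence `Δ = 2 Δ`. -/
lemma IsLie.jacobi_compr₂ {br : ConformalProduct L} (hbr : IsLie S br) {D : L →ₗ[ℂ] L}
    (hgrade : ∀ (i : ZMod 2) (w : L), w ∈ S.grade i → D w ∈ S.grade i)
    (hD : IsHalfDerivation S br D) (i j : ZMod 2) (x y : L) (hx : x ∈ S.grade i)
    (hy : y ∈ S.grade j) (z : L) (lam mu : ℂ) :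
    (br.compr₂ D).mul lam x ((br.compr₂ D).mul mu y z) =
      (br.compr₂ D).mul (lam + mu) ((br.compr₂ D).mul lam x y) z +
        sgn i j • (br.compr₂ D).mul mu y ((br.compr₂ D).mul lam x z) := by
  simp only [ConformalProduct.mul_compr₂]
  set s := sgn i j
  have hE : br.mul lam (D x) (br.mul mu y z) - br.mul (lam + mu) (br.mul lam x y) (D z) -
        s • br.mul mu (D y) (br.mul lam x z) =
      (2 : ℂ) • (br.mul (lam + mu) (D (br.mul lam x y)) z +
        s • br.mul mu y (D (br.mul lam x z)) - br.mul lam x (D (br.mul mu y z))) := by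
    have jDx := hbr.jacobi i j (D x) y (hgrade i x hx) hy z lam mu
    have jDy := hbr.jacobi i j x (D y) hx (hgrade j y hy) z lam mu
    have jDz := hbr.jacobi i j x y hx hy (D z) lam mu
    have dxy := congrArg (br.mul (lam + mu) · z) (hD i x hx y lam)
    have dxz := congrArg (br.mul mu y ·) (hD i x hx z lam)
    have dyz := congrArg (br.mul lam x ·) (hD j y hy z mu)
    simp only [ConformalProduct.add_mul, ConformalProduct.smul_mul, ConformalProduct.mul_add,
      ConformalProduct.mul_smul] at dxy dxz dyz
    linear_combination (norm := module) jDx + jDz + jDy - dxy - s • dxz + dyz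
  have dxyz := congrArg D (hD i x hx (br.mul mu y z) lam)
  have dyxz := congrArg D (hD j y hy (br.mul lam x z) mu)
  have dxy_z := congrArg D (hD (i + j) _ (hbr.mul_mem hx hy lam) z (lam + mu))
  have jac := congrArg (fun w => D (D w)) (hbr.jacobi i j x y hx hy z lam mu)
  have dE := congrArg D hE
  simp only [map_add, map_sub, map_smul] at dxyz dyxz dxy_z jac dE
  linear_combination (norm := module) dxyz - dxy_z - s • dyxz - (2 : ℂ) • jac + dE

lemma IsLambdaProduct.compr₂ {c : ConformalProduct L} (hc : IsLambdaProduct S c)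
    {D : L →ₗ[ℂ] L} (hgrade : ∀ (i : ZMod 2) (w : L), w ∈ S.grade i → D w ∈ S.grade i)
    (hX : ∀ w : L, D ((X : ℂ[X]) • w) = (X : ℂ[X]) • D w) :
    IsLambdaProduct S (c.compr₂ D) where
  even i j a b ha hb n := hgrade _ _ (hc.even i j a b ha hb n)
  sesq_left lam a b := by
    rw [c.mul_compr₂, c.mul_compr₂, hc.sesq_left, map_smul]
  sesq_right lam a b := by
    rw [c.mul_compr₂, c.mul_compr₂, hc.sesq_right, map_add, hX, map_smul]

variable {m : ConformalProduct L} {h : L}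

lemma IsLambdaProduct.coeff_zero_X_smul (hm : IsLambdaProduct S m) (w : L) :
    m.coeff 0 h ((X : ℂ[X]) • w) = (X : ℂ[X]) • m.coeff 0 h w := by
  simpa [ConformalProduct.mul_zero_eq_coeff] using hm.sesq_right 0 h w

lemma IsLambdaProduct.coeff_zero_mem (hm : IsLambdaProduct S m) (hh : h ∈ S.grade 0)
    {i : ZMod 2} {w : L} (hw : w ∈ S.grade i) : m.coeff 0 h w ∈ S.grade i := by
  simpa using hm.even 0 i h w hh hw 0

lemma IsTPCSA.isHalfDerivation_coeff_zero {br : ConformalProduct L} (hT : IsTPCSA S m br)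
    (hh : h ∈ S.grade 0) : IsHalfDerivation S br (m.coeff 0 h) := by
  intro j b hb c mu
  simpa [sgn, ConformalProduct.mul_zero_eq_coeff] using hT.transposedLeibniz 0 j h b hh hb c 0 mu

end Graded

section ScalarTower

variable [Module ℂ[X] L] [IsScalarTower ℂ ℂ[X] L]

lemma C_smul_eq_smul (r : ℂ) (w : L) : (C r : ℂ[X]) • w = r • w :=
  algebraMap_smul ℂ[X] r w

lemma map_polynomial_smul_of_map_X_smul (D : L →ₗ[ℂ] L)
    (hX : ∀ w : L, D ((X : ℂ[X]) • w) = (X : ℂ[X]) • D w) (p : ℂ[X]) (w : L) :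
    D (p • w) = p • D w := by
  induction p using Polynomial.induction_on with
  | C r => rw [C_smul_eq_smul, C_smul_eq_smul, map_smul]
  | add p q hp hq => rw [add_smul, map_add, hp, hq, add_smul]
  | monomial n r ih =>
    rw [show C r * X ^ (n + 1) = X * (C r * X ^ n) by ring, mul_smul, hX, ih, ← mul_smul]

namespace ConformalProduct

variable (c : ConformalProduct L)

lemma polynomial_smul_mul
    (hsl : ∀ (lam : ℂ) (a b : L), c.mul lam ((X : ℂ[X]) • a) b = (-lam) • c.mul lam a b)
    (lam : ℂ) (p : ℂ[X]) (a b : L) :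
    c.mul lam (p • a) b = p.eval (-lam) • c.mul lam a b := by
  induction p using Polynomial.induction_on with
  | C r => rw [C_smul_eq_smul, c.smul_mul, eval_C]
  | add p q hp hq => rw [add_smul, c.add_mul, hp, hq, eval_add, add_smul]
  | monomial n r ih =>
    rw [show C r * X ^ (n + 1) = X * (C r * X ^ n) by ring, mul_smul, hsl, ih, smul_smul]
    simp only [eval_mul, eval_X]

/- Substituting `λ ↦ -∂-α` inside the left factor of a left-sesquilinear product `∘_ρ`
amounts to substituting `λ ↦ ρ - α`, since `∂` acts there as `-ρ`. -/
lemma cmul_mul (c' : ConformalProduct L)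
    (hsl : ∀ (lam : ℂ) (a b : L), c.mul lam ((X : ℂ[X]) • a) b = (-lam) • c.mul lam a b)
    (ρ α : ℂ) (a b u : L) :
    c.mul ρ (c'.cmul α a b) u = c.mul ρ (c'.mul (ρ - α) a b) u := by
  let f : L →+ L := AddMonoidHom.mk' (c.mul ρ · u) fun x y => c.add_mul ρ x y u
  change f (c'.cmul α a b) = f (c'.mul (ρ - α) a b)
  rw [cmul, mul, map_finsum f (c'.hasFiniteSupport_smul_coeff _ a b),
    map_finsum f (c'.hasFiniteSupport_smul_coeff _ a b)]
  refine finsum_congr fun n => ?_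
  simp only [f, AddMonoidHom.mk'_apply, c.polynomial_smul_mul hsl, c.smul_mul, eval_pow,
    eval_neg, eval_add, eval_X, eval_C]
  ring_nf

end ConformalProduct

variable {S : SuperModule L} {m br : ConformalProduct L} {h : L}

lemma IsLie.compr₂ (hbr : IsLie S br) {D : L →ₗ[ℂ] L}
    (hgrade : ∀ (i : ZMod 2) (w : L), w ∈ S.grade i → D w ∈ S.grade i)
    (hX : ∀ w : L, D ((X : ℂ[X]) • w) = (X : ℂ[X]) • D w) (hD : IsHalfDerivation S br D) :
    IsLie S (br.compr₂ D) where
  toIsLambdaProduct := hbr.toIsLambdaProduct.compr₂ hgrade hX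
  skew i j a b ha hb lam := by
    rw [br.mul_compr₂, br.cmul_compr₂ (map_polynomial_smul_of_map_X_smul D hX),
      hbr.skew i j a b ha hb lam, map_neg, map_smul]
  jacobi := hbr.jacobi_compr₂ hgrade hD

lemma IsCommAssoc.mul_coeff_zero_comm (hm : IsCommAssoc S m) (hh : h ∈ S.grade 0)
    {i : ZMod 2} {a : L} (ha : a ∈ S.grade i) (w : L) (lam : ℂ) :
    m.mul lam a (m.coeff 0 h w) = m.coeff 0 h (m.mul lam a w) :=
  calc m.mul lam a (m.coeff 0 h w)
      = m.mul lam (m.mul lam a h) w := by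
        rw [← m.mul_zero_eq_coeff, hm.assoc, add_zero]
    _ = m.mul lam (m.cmul lam h a) w := by
        rw [hm.comm i 0 a h ha hh lam, sgn, ZMod.val_zero, mul_zero, pow_zero, one_smul]
    _ = m.mul lam (m.mul 0 h a) w := by
        rw [m.cmul_mul m hm.sesq_left, sub_self]
    _ = m.coeff 0 h (m.mul lam a w) := by
        rw [← m.mul_zero_eq_coeff, hm.assoc, zero_add]

lemma IsTPCSA.compr₂_coeff_zero (hT : IsTPCSA S m br) (hh : h ∈ S.grade 0) :
    IsTPCSA S m (br.compr₂ (m.coeff 0 h)) where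
  commAssoc := hT.commAssoc
  lie := hT.lie.compr₂ (fun _ _ => hT.commAssoc.coeff_zero_mem hh)
    hT.commAssoc.coeff_zero_X_smul (hT.isHalfDerivation_coeff_zero hh)
  transposedLeibniz i j a b ha hb c lam mu := by
    simp only [ConformalProduct.mul_compr₂]
    rw [hT.commAssoc.mul_coeff_zero_comm hh ha, ← map_smul, hT.transposedLeibniz i j a b ha hb c,
      map_add, map_smul]

/-- modifying the Lie conformal bracket of a transposed Poisson conformal
superalgebra by the `0`-th product with an even element `h`, i.e.
`[x_λ y]^h = h ∘_(0) [x_λ y]`, again yields a transposed Poisson conformal superalgebra. -/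
theorem statement_10 (S : SuperModule L) (m br : ConformalProduct L)
    (hT : IsTPCSA S m br) (h : L) (hh : h ∈ S.grade 0) :
    ∃ brh : ConformalProduct L,
      (∀ (lam : ℂ) (x y : L), brh.mul lam x y = m.mul 0 h (br.mul lam x y)) ∧
      IsTPCSA S m brh :=
  ⟨br.compr₂ (m.coeff 0 h), fun lam x y => by rw [br.mul_compr₂, m.mul_zero_eq_coeff],
    hT.compr₂_coeff_zero hh⟩

end ScalarTower

end TPCSAFormal
end
end

section
/- Let (L, ∘_λ, ∗_λ) be a pre-Lie commutative conformal superalgebra which additionally satisfies (a ∘_λ b) ∗_{λ+μ} c = a ∘_λ (b ∗_μ c) for all homogeneous a, b, c ∈ L. Then (L, ∘_λ, ∗_λ) is a pre-Lie Poisson conformal superalgebra, i.e., it also satisfies (a ∗_λ b) ∘_{λ+μ} c − a ∗_λ (b ∘_μ c) = (−1)^{|a||b|}((b ∗_μ a) ∘_{λ+μ} c − b ∗_μ (a ∘_λ c)). -/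
open Polynomial
open scoped TensorProduct

noncomputable section

namespace TPCSAFormal

variable (L : Type*) [AddCommGroup L] [Module ℂ L]
  [Module (Polynomial ℂ) L] [IsScalarTower ℂ (Polynomial ℂ) L]

variable {L}

/-!
Both sides of the second compatibility identity collapse under the pre-Lie commutative identity:
the left side to `-(-1)^{|a||b|} b ∘_μ (a ∗_λ c)`, the right side to `-a ∘_λ (b ∗_μ c)`.
These agree because `a ∘_λ (b ∗_μ c) = (a ∘_λ b) ∗_{λ+μ} c`, and supercommutativity turns
`a ∘_λ b` into `± b ∘_{-∂-λ} a`, on which `∗_{λ+μ}` evaluates `∂` at `-(λ+μ)`, giving `± b ∘_μ a`.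
-/

section Lemmas

variable {L : Type*} [AddCommGroup L] [Module ℂ L]

lemma sgn_comm (i j : ZMod 2) : sgn i j = sgn j i := by
  rw [sgn, sgn, Nat.mul_comm]

lemma sgn_mul_self (i j : ZMod 2) : sgn i j * sgn i j = 1 := by
  rw [sgn, ← pow_add, ← two_mul, pow_mul, neg_one_sq, one_pow]

namespace ConformalProduct

lemma support_smul_coeff_finite {R : Type*} [Zero R] [SMulZeroClass R L]
    (m : ConformalProduct L) (f : ℕ → R) (a b : L) :
    (Function.support fun n => f n • m.coeff n a b).Finite := by
  obtain ⟨N, hN⟩ := m.coeff_finite a b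
  refine (Set.finite_Iio N).subset fun n hn => ?_
  by_contra hnN
  exact hn (by simp only [hN n (not_lt.mp hnN), smul_zero])

def mulLeftₗ (m : ConformalProduct L) (lam : ℂ) (c : L) : L →ₗ[ℂ] L where
  toFun a := m.mul lam a c
  map_add' a a' := by
    simp only [mul]
    rw [← finsum_add_distrib (m.support_smul_coeff_finite _ a c)
      (m.support_smul_coeff_finite _ a' c)]
    exact finsum_congr fun n => by rw [map_add, LinearMap.add_apply, smul_add]
  map_smul' r a := by
    simp only [mul, RingHom.id_apply, smul_finsum]
    exact finsum_congr fun n => by rw [map_smul, LinearMap.smul_apply, smul_comm]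

lemma mul_add_left (m : ConformalProduct L) (lam : ℂ) (a a' c : L) :
    m.mul lam (a + a') c = m.mul lam a c + m.mul lam a' c :=
  (m.mulLeftₗ lam c).map_add a a'

lemma mul_smul_left (m : ConformalProduct L) (lam r : ℂ) (a c : L) :
    m.mul lam (r • a) c = r • m.mul lam a c :=
  (m.mulLeftₗ lam c).map_smul r a

lemma mul_finsum_left (m : ConformalProduct L) (lam : ℂ) (c : L)
    (f : ℕ → L) (hf : (Function.support f).Finite) :
    m.mul lam (∑ᶠ n, f n) c = ∑ᶠ n, m.mul lam (f n) c :=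
  (m.mulLeftₗ lam c).toAddMonoidHom.map_finsum hf

end ConformalProduct

variable [Module (Polynomial ℂ) L] [IsScalarTower ℂ (Polynomial ℂ) L] {S : SuperModule L}

namespace IsLambdaProduct

variable {p : ConformalProduct L}

lemma mul_polynomial_smul_left (hp : IsLambdaProduct S p) (lam : ℂ) (q : Polynomial ℂ)
    (a c : L) : p.mul lam (q • a) c = q.eval (-lam) • p.mul lam a c := by
  induction q using Polynomial.induction_on with
  | C r =>
    rw [Polynomial.eval_C, ← p.mul_smul_left, Polynomial.C_eq_algebraMap, algebraMap_smul]
  | add q r hq hr =>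
    rw [add_smul, p.mul_add_left, hq, hr, Polynomial.eval_add, add_smul]
  | monomial n r ih =>
    rw [show C r * X ^ (n + 1) = X * (C r * X ^ n) by ring, mul_smul, hp.sesq_left, ih,
      smul_smul]
    simp only [Polynomial.eval_mul, Polynomial.eval_pow, Polynomial.eval_C, Polynomial.eval_X]

lemma mul_cmul_left (hp : IsLambdaProduct S p) (m : ConformalProduct L) (lam nu : ℂ)
    (a b c : L) : p.mul nu (m.cmul lam b a) c = p.mul nu (m.mul (nu - lam) b a) c := by
  rw [ConformalProduct.cmul, ConformalProduct.mul.eq_1 m,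
    p.mul_finsum_left _ _ _ (m.support_smul_coeff_finite _ b a),
    p.mul_finsum_left _ _ _ (m.support_smul_coeff_finite _ b a)]
  refine finsum_congr fun n => ?_
  rw [hp.mul_polynomial_smul_left, p.mul_smul_left]
  simp only [Polynomial.eval_pow, Polynomial.eval_neg, Polynomial.eval_add,
    Polynomial.eval_X, Polynomial.eval_C]
  congr 1
  ring

end IsLambdaProduct

lemma IsCommAssoc.mul_mul_left_comm {mc p : ConformalProduct L} (hmc : IsCommAssoc S mc)
    (hp : IsLambdaProduct S p)
    (hcompat : ∀ (lam mu : ℂ) (a b c : L),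
      p.mul (lam + mu) (mc.mul lam a b) c = mc.mul lam a (p.mul mu b c))
    {i j : ZMod 2} {a b : L} (ha : a ∈ S.grade i) (hb : b ∈ S.grade j) (c : L) (lam mu : ℂ) :
    mc.mul lam a (p.mul mu b c) = sgn i j • mc.mul mu b (p.mul lam a c) :=
  calc mc.mul lam a (p.mul mu b c)
      = p.mul (lam + mu) (mc.mul lam a b) c := (hcompat lam mu a b c).symm
    _ = sgn i j • p.mul (lam + mu) (mc.cmul lam b a) c := by
        rw [hmc.comm i j a b ha hb lam, p.mul_smul_left]
    _ = sgn i j • p.mul (mu + lam) (mc.mul mu b a) c := by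
        rw [hp.mul_cmul_left, add_sub_cancel_left, add_comm]
    _ = sgn i j • mc.mul mu b (p.mul lam a c) := by rw [hcompat]

end Lemmas

/-- a pre-Lie commutative conformal superalgebra satisfying
`(a ∘_λ b) ∗_{λ+μ} c = a ∘_λ (b ∗_μ c)` is a pre-Lie Poisson conformal superalgebra. -/
theorem statement_14 (S : SuperModule L) (mc p : ConformalProduct L)
    (hPLC : IsPreLieComm S mc p)
    (hcompat : ∀ (lam mu : ℂ) (a b c : L),
      p.mul (lam + mu) (mc.mul lam a b) c = mc.mul lam a (p.mul mu b c)) :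
    IsPreLiePoisson S mc p := by
  refine ⟨hPLC.commAssoc, hPLC.leftSymmetric, hcompat, fun i j a b ha hb c lam mu => ?_⟩
  have hcomm := hPLC.commAssoc.mul_mul_left_comm hPLC.leftSymmetric.toIsLambdaProduct hcompat
    ha hb c lam mu
  rw [hPLC.compat i j a b ha hb c lam mu, hPLC.compat j i b a hb ha c mu lam, hcomm,
    sgn_comm j i, smul_smul, sgn_mul_self, one_smul, add_comm mu lam]
  module
end TPCSAFormal
end
end
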